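/- For all real numbers γ, β ≥ 0, the product g(β, n)·A(γ, n) satisfies the following order estimates. If β > 2: Θ(n) for γ > 3/2; Θ(n·log n) for γ = 3/2; Θ(n^{5/2−γ}) for 1 < γ < 3/2; Θ(n^{3/2}/log n) for γ = 1; Θ(n^{3/2}) for 0 ≤ γ < 1. If β = 2: Θ(n·log n) for γ > 3/2; Θ(n·(log n)²) for γ = 3/2; Θ(n^{5/2−γ}·log n) for 1 < γ < 3/2; Θ(n^{3/2}) for γ = 1; Θ(n^{3/2}·log n) for 0 ≤ γ < 1. If 1 < β < 2: Θ(n^{2−β/2}) for γ > 3/2; Θ(n^{2−β/2}·log n) for γ = 3/2; Θ(n^{7/2−γ−β/2}) for 1 < γ < 3/2; Θ(n^{(5−β)/2}/log n) for γ = 1; Θ(n^{(5−β)/2}) for 0 ≤ γ < 1. If β = 1: Θ(n^{3/2}/√(log n)) for γ > 3/2; Θ(n^{3/2}·√(log n)) for γ = 3/2; Θ(n^{3−γ}/√(log n)) for 1 < γ < 3/2; Θ(n²/(log n)^{3/2}) for γ = 1; Θ(n²/√(log n)) for 0 ≤ γ < 1. If 0 ≤ β < 1: Θ(n^{3/2})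 for γ > 3/2; Θ(n^{3/2}·log n) for γ = 3/2; Θ(n^{3−γ}) for 1 < γ < 3/2; Θ(n²/log n) for γ = 1; Θ(n²) for 0 ≤ γ < 1. -/
import Mathlib


/-- `f(n) = Θ(h(n))`: there exist constants `0 < c₁ ≤ c₂` and `N₀` such that
`c₁·h(n) ≤ f(n) ≤ c₂·h(n)` for all integers `n ≥ N₀`. -/
def IsBigTheta (f h : ℕ → ℝ) : Prop :=
  ∃ c₁ c₂ : ℝ, 0 < c₁ ∧ c₁ ≤ c₂ ∧ ∃ N₀ : ℕ, ∀ n : ℕ, N₀ ≤ n →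
    c₁ * h n ≤ f n ∧ f n ≤ c₂ * h n

/-- Zipf normalization `Z(γ, n) = Σ_{j=1}^{n−1} j^{−γ}`. -/
noncomputable def Z (γ : ℝ) (n : ℕ) : ℝ := ∑ j ∈ Finset.Icc 1 (n - 1), (j : ℝ) ^ (-γ)

/-- `A(γ, n) = n·Z(γ, n)⁻¹·Σ_{l=1}^{n−1} l^{1/2−γ}`. -/
noncomputable def A (γ : ℝ) (n : ℕ) : ℝ :=
  n * (Z γ n)⁻¹ * ∑ l ∈ Finset.Icc 1 (n - 1), (l : ℝ) ^ (1 / 2 - γ)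

/-- `g(β, n)`: `1` if `β > 2`; `log n` if `β = 2`; `n^{1−β/2}` if `1 < β < 2`;
`√(n/log n)` if `β = 1`; `√n` if `0 ≤ β < 1`. -/
noncomputable def g (β : ℝ) (n : ℕ) : ℝ :=
  if 2 < β then 1
  else if β = 2 then Real.log n
  else if 1 < β then (n : ℝ) ^ (1 - β / 2)
  else if β = 1 then Real.sqrt ((n : ℝ) / Real.log n)
  else Real.sqrt n

theorem IsBigTheta.of_bounds {f h : ℕ → ℝ} (c₁ c₂ : ℝ) (hc : 0 < c₁) (N : ℕ)
    (hb : ∀ n, N ≤ n → c₁ * h n ≤ f n ∧ f n ≤ c₂ * h n)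
    (hpos : ∀ n, N ≤ n → 0 < h n) : IsBigTheta f h := by
  refine ⟨c₁, max c₁ c₂, hc, le_max_left _ _, max N 2, fun n hn => ?_⟩
  have h1 := hb n (le_trans (le_max_left _ _) hn)
  have h2 := hpos n (le_trans (le_max_left _ _) hn)
  exact ⟨h1.1, h1.2.trans (by nlinarith [le_max_right c₁ c₂])⟩

theorem IsBigTheta.congr_f {f f' h : ℕ → ℝ} (hf : IsBigTheta f h) (N : ℕ)
    (he : ∀ n, N ≤ n → f n = f' n) : IsBigTheta f' h := by
  obtain ⟨c₁, c₂, hc, hcc, N₀, hb⟩ := hf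
  exact ⟨c₁, c₂, hc, hcc, max N₀ N, fun n hn => (he n (le_trans (le_max_right _ _) hn)) ▸
    hb n (le_trans (le_max_left _ _) hn)⟩

theorem IsBigTheta.congr_h {f h h' : ℕ → ℝ} (hf : IsBigTheta f h) (N : ℕ)
    (he : ∀ n, N ≤ n → h n = h' n) : IsBigTheta f h' := by
  obtain ⟨c₁, c₂, hc, hcc, N₀, hb⟩ := hf
  exact ⟨c₁, c₂, hc, hcc, max N₀ N, fun n hn => (he n (le_trans (le_max_right _ _) hn)) ▸
    hb n (le_trans (le_max_left _ _) hn)⟩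

theorem isBigTheta_refl (f : ℕ → ℝ) : IsBigTheta f f :=
  ⟨1, 1, one_pos, le_refl _, 0, fun n _ => by simp⟩

theorem IsBigTheta.mul {f₁ f₂ h₁ h₂ : ℕ → ℝ} (H₁ : IsBigTheta f₁ h₁) (H₂ : IsBigTheta f₂ h₂)
    (N : ℕ) (hn₁ : ∀ n, N ≤ n → 0 ≤ h₁ n) (hn₂ : ∀ n, N ≤ n → 0 ≤ h₂ n) :
    IsBigTheta (fun n => f₁ n * f₂ n) (fun n => h₁ n * h₂ n) := by
  obtain ⟨a₁, a₂, ha, haa, Na, hba⟩ := H₁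
  obtain ⟨b₁, b₂, hb, hbb, Nb, hbb'⟩ := H₂
  refine ⟨a₁ * b₁, a₂ * b₂, mul_pos ha hb,
    mul_le_mul haa hbb hb.le (le_trans ha.le haa), max N (max Na Nb), fun n hn => ?_⟩
  have hN : N ≤ n := le_trans (le_max_left _ _) hn
  have h1 := hba n (le_trans ((le_max_left _ _).trans (le_max_right _ _)) hn)
  have h2 := hbb' n (le_trans ((le_max_right _ _).trans (le_max_right _ _)) hn)
  have k1 := hn₁ n hN; have k2 := hn₂ n hN
  constructor
  · calc a₁ * b₁ * (h₁ n * h₂ n) = (a₁ * h₁ n) * (b₁ * h₂ n) := by ring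
    _ ≤ f₁ n * f₂ n :=
      mul_le_mul h1.1 h2.1 (mul_nonneg hb.le k2) (le_trans (mul_nonneg ha.le k1) h1.1)
  · calc f₁ n * f₂ n ≤ (a₂ * h₁ n) * (b₂ * h₂ n) :=
      mul_le_mul h1.2 h2.2 (le_trans (mul_nonneg hb.le k2) h2.1) (mul_nonneg (le_trans ha.le haa) k1)
    _ = a₂ * b₂ * (h₁ n * h₂ n) := by ring

theorem IsBigTheta.inv {f h : ℕ → ℝ} (H : IsBigTheta f h) (N : ℕ)
    (hpos : ∀ n, N ≤ n → 0 < h n) : IsBigTheta (fun n => (f n)⁻¹) (fun n => (h n)⁻¹) := by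
  obtain ⟨c₁, c₂, hc, hcc, N₀, hb⟩ := H
  have hc2 : 0 < c₂ := lt_of_lt_of_le hc hcc
  refine ⟨c₂⁻¹, c₁⁻¹, by positivity, by gcongr, max N N₀, fun n hn => ?_⟩
  have hp := hpos n (le_trans (le_max_left _ _) hn)
  have h1 := hb n (le_trans (le_max_right _ _) hn)
  have hfpos : 0 < f n := lt_of_lt_of_le (by positivity) h1.1
  constructor
  · rw [show c₂⁻¹ * (h n)⁻¹ = (c₂ * h n)⁻¹ by rw [mul_inv]]
    exact inv_anti₀ hfpos h1.2
  · rw [show c₁⁻¹ * (h n)⁻¹ = (c₁ * h n)⁻¹ by rw [mul_inv]]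
    exact inv_anti₀ (by positivity) h1.1

noncomputable def T (p : ℝ) (m : ℕ) : ℝ := ∑ j ∈ Finset.Icc 1 m, (j : ℝ) ^ p

-- reindex: Icc 1 m  =  image of Ico 1 (m+1)
lemma T_eq_Ico (p : ℝ) (m : ℕ) : T p m = ∑ j ∈ Finset.Ico 1 (m+1), (j : ℝ) ^ p := by
  rw [T, Finset.Ico_add_one_right_eq_Icc]

lemma T_succ_shift (f : ℝ → ℝ) (m : ℕ) :
    ∑ i ∈ Finset.Ico 1 m, f ((i + 1 : ℕ) : ℝ) = ∑ j ∈ Finset.Ico 2 (m+1), f (j : ℝ) := by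
  rw [Finset.sum_Ico_eq_sum_range, Finset.sum_Ico_eq_sum_range]
  simp only [Nat.add_sub_cancel, show m + 1 - 2 = m - 1 by omega]
  apply Finset.sum_congr rfl
  intro i _
  congr 1
  push_cast
  ring

lemma T_split (p : ℝ) (m : ℕ) (hm : 1 ≤ m) :
    T p m = 1 + ∑ j ∈ Finset.Ico 2 (m+1), (j : ℝ) ^ p := by
  rw [T_eq_Ico]
  rw [← Finset.sum_Ico_consecutive _ (by omega : 1 ≤ 2) (by omega : 2 ≤ m + 1)]
  norm_num

lemma antitoneOn_rpow (p : ℝ) (hp : p ≤ 0) (b : ℝ) :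
    AntitoneOn (fun x : ℝ => x ^ p) (Set.Icc 1 b) := by
  intro x hx y hy hxy
  exact Real.rpow_le_rpow_of_nonpos (lt_of_lt_of_le one_pos hx.1) hxy hp

-- lower bound, antitone case
lemma T_lower_anti (p : ℝ) (hp1 : -1 < p) (hp2 : p ≤ 0) (m : ℕ) (hm : 1 ≤ m) :
    (((m:ℝ)+1) ^ (p+1) - 1) / (p+1) ≤ T p m := by
  have h := AntitoneOn.integral_le_sum_Ico (f := fun x : ℝ => x ^ p)
    (a := 1) (b := m + 1) (by omega) (by push_cast; exact antitoneOn_rpow p hp2 _)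
  rw [T_eq_Ico]
  refine le_trans (le_of_eq ?_) h
  rw [integral_rpow (Or.inl hp1)]
  push_cast
  rw [Real.one_rpow]

-- upper bound, antitone case, p ≠ -1
lemma T_upper_anti (p : ℝ) (hp1 : -1 < p) (hp2 : p ≤ 0) (m : ℕ) (hm : 1 ≤ m) :
    T p m ≤ 1 + ((m:ℝ) ^ (p+1) - 1) / (p+1) := by
  have h := AntitoneOn.sum_le_integral_Ico (f := fun x : ℝ => x ^ p)
    (a := 1) (b := m) (by omega) (by push_cast; exact antitoneOn_rpow p hp2 _)
  rw [T_split p m hm, ← T_succ_shift (fun x => x ^ p) m]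
  have : ∫ x in (1:ℕ)..(m:ℕ), (x:ℝ) ^ p = ((m:ℝ) ^ (p+1) - 1) / (p+1) := by
    rw [integral_rpow (Or.inl hp1)]; push_cast; rw [Real.one_rpow]
  push_cast at h this ⊢
  linarith [le_trans h (le_of_eq this)]

-- p = -1 case: use inv
lemma rpow_neg_one_eq (x : ℝ) : x ^ (-1 : ℝ) = x⁻¹ := by
  rw [show (-1 : ℝ) = ((-1 : ℤ) : ℝ) by norm_num, Real.rpow_intCast, zpow_neg_one]

lemma antitoneOn_inv (b : ℝ) : AntitoneOn (fun x : ℝ => x⁻¹) (Set.Icc 1 b) := by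
  intro x hx y hy hxy
  exact inv_anti₀ (lt_of_lt_of_le one_pos hx.1) hxy

lemma zero_notMem_uIcc {a b : ℝ} (ha : 0 < a) (hb : a ≤ b) : (0:ℝ) ∉ Set.uIcc a b := by
  rw [Set.uIcc_of_le hb]; rintro ⟨h1, h2⟩; linarith

lemma T_lower_log (m : ℕ) (hm : 1 ≤ m) : Real.log ((m:ℝ)+1) ≤ T (-1) m := by
  have h := AntitoneOn.integral_le_sum_Ico (f := fun x : ℝ => x⁻¹)
    (a := 1) (b := m + 1) (by omega) (by push_cast; exact antitoneOn_inv _)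
  rw [T_eq_Ico]
  simp only [rpow_neg_one_eq]
  refine le_trans (le_of_eq ?_) h
  rw [integral_inv (by push_cast; exact zero_notMem_uIcc one_pos (by exact_mod_cast Nat.succ_le_succ (Nat.zero_le m)))]
  push_cast
  rw [div_one]

lemma T_upper_log (m : ℕ) (hm : 1 ≤ m) : T (-1) m ≤ 1 + Real.log m := by
  have h := AntitoneOn.sum_le_integral_Ico (f := fun x : ℝ => x⁻¹)
    (a := 1) (b := m) (by omega) (by push_cast; exact antitoneOn_inv _)
  rw [T_split _ m hm, ← T_succ_shift (fun x => x ^ (-1:ℝ)) m]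
  simp only [rpow_neg_one_eq]
  have : ∫ x in ((1:ℕ):ℝ)..((m:ℕ):ℝ), x⁻¹ = Real.log m := by
    rw [integral_inv (by push_cast; exact zero_notMem_uIcc one_pos (Nat.one_le_cast.mpr hm))]
    push_cast; rw [div_one]
  push_cast at h this ⊢
  linarith [le_trans h (le_of_eq this)]

-- monotone case p ≥ 0 : lower via integral
lemma T_lower_mono (p : ℝ) (hp : 0 ≤ p) (m : ℕ) :
    (m:ℝ) ^ (p+1) / (p+1) ≤ T p m := by
  have hmono : MonotoneOn (fun x : ℝ => x ^ p) (Set.Icc ((0:ℕ):ℝ) ((m:ℕ):ℝ)) := by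
    intro x hx y hy hxy
    exact Real.rpow_le_rpow (by exact_mod_cast hx.1) hxy hp
  have h := MonotoneOn.integral_le_sum_Ico (f := fun x : ℝ => x ^ p)
    (a := 0) (b := m) (by omega) hmono
  have heq : ∑ i ∈ Finset.Ico 0 m, ((i + 1:ℕ):ℝ) ^ p = T p m := by
    rw [T_eq_Ico, Finset.sum_Ico_eq_sum_range, Finset.sum_Ico_eq_sum_range]
    simp only [Nat.sub_zero, Nat.add_sub_cancel]
    apply Finset.sum_congr rfl
    intro i _
    congr 2
    omega
  have hint : ∫ x in ((0:ℕ):ℝ)..((m:ℕ):ℝ), x ^ p = (m:ℝ) ^ (p+1) / (p+1) := by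
    rw [integral_rpow (Or.inl (by linarith))]
    push_cast
    rw [Real.zero_rpow (by linarith), sub_zero]
  rw [← heq, ← hint]
  exact h

-- monotone case p ≥ 0 : trivial upper
lemma T_upper_mono (p : ℝ) (hp : 0 ≤ p) (m : ℕ) : T p m ≤ (m:ℝ) ^ (p+1) := by
  have h : T p m ≤ (Finset.Icc 1 m).card • (m:ℝ) ^ p := by
    apply Finset.sum_le_card_nsmul
    intro j hj
    simp only [Finset.mem_Icc] at hj
    exact Real.rpow_le_rpow (by positivity) (by exact_mod_cast hj.2) hp
  simp only [Nat.card_Icc, Nat.add_sub_cancel, nsmul_eq_mul] at h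
  calc T p m ≤ (m:ℝ) * (m:ℝ) ^ p := h
  _ = (m:ℝ) ^ (p+1) := by
    rcases Nat.eq_zero_or_pos m with h | h
    · subst h; simp [Real.zero_rpow (show p+1 ≠ 0 by linarith)]
    · rw [Real.rpow_add (by exact_mod_cast h), Real.rpow_one]; ring

-- p < -1: bounded
lemma T_lower_one (p : ℝ) (m : ℕ) (hm : 1 ≤ m) : 1 ≤ T p m := by
  have h : ((1:ℕ):ℝ) ^ p ≤ T p m := by
    apply Finset.single_le_sum (f := fun j : ℕ => (j:ℝ) ^ p)
    · intro i _; positivity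
    · simp [Finset.mem_Icc, hm]
  simpa using h

lemma T_upper_bounded (p : ℝ) (hp : p < -1) (m : ℕ) (hm : 1 ≤ m) :
    T p m ≤ 1 + 1 / (-(p+1)) := by
  have h := AntitoneOn.sum_le_integral_Ico (f := fun x : ℝ => x ^ p)
    (a := 1) (b := m) (by omega) (by push_cast; exact antitoneOn_rpow p (by linarith) _)
  rw [T_split p m hm, ← T_succ_shift (fun x => x ^ p) m]
  have hint : ∫ x in ((1:ℕ):ℝ)..((m:ℕ):ℝ), x ^ p = ((m:ℝ) ^ (p+1) - 1) / (p+1) := by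
    rw [integral_rpow (Or.inr ⟨by linarith, by push_cast; exact zero_notMem_uIcc one_pos (Nat.one_le_cast.mpr hm)⟩)]
    push_cast; rw [Real.one_rpow]
  have hq : 0 < -(p+1) := by linarith
  have hx : 0 ≤ (m:ℝ) ^ (p+1) := by positivity
  have hle : ((m:ℝ) ^ (p+1) - 1) / (p+1) ≤ 1 / (-(p+1)) := by
    rw [show ((m:ℝ)^(p+1) - 1)/(p+1) = (1 - (m:ℝ)^(p+1))/(-(p+1)) by rw [← neg_div_neg_eq]; ring_nf]
    gcongr
    linarith
  push_cast at h hint ⊢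
  linarith [le_trans (le_trans h (le_of_eq hint)) hle]

lemma rpm {x : ℝ} (hx : 0 < x) {a b c : ℝ} (h : a + b = c) : x ^ a * x ^ b = x ^ c := by
  rw [← Real.rpow_add hx, h]

lemma cast_pred (n : ℕ) (hn : 2 ≤ n) : ((n-1:ℕ):ℝ) = (n:ℝ) - 1 := by
  push_cast [Nat.cast_sub (by omega : 1 ≤ n)]; ring

lemma thetaT_pos (p : ℝ) (hp : -1 < p) :
    IsBigTheta (fun n => T p (n-1)) (fun n => (n:ℝ) ^ (p+1)) := by
  have hp1 : (0:ℝ) < p + 1 := by linarith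
  rcases le_or_gt p 0 with hle | hgt
  · have h2 : (2:ℝ) ^ (-(p+1)) < 1 :=
      Real.rpow_lt_one_of_one_lt_of_neg one_lt_two (by linarith)
    have h2p : (0:ℝ) < (2:ℝ) ^ (-(p+1)) := Real.rpow_pos_of_pos two_pos _
    refine IsBigTheta.of_bounds ((1 - (2:ℝ) ^ (-(p+1))) / (p+1)) (1 + 1/(p+1))
      (by apply div_pos <;> linarith) 2 (fun n hn => ?_) (fun n hn => by
        have : (0:ℝ) < n := by exact_mod_cast (by omega : 0 < n)
        positivity)
    have hm : 1 ≤ n - 1 := by omega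
    have hc : ((n-1:ℕ):ℝ) = (n:ℝ) - 1 := cast_pred n hn
    have hn2 : (2:ℝ) ≤ (n:ℝ) := by exact_mod_cast hn
    have hnp : (0:ℝ) < n := by linarith
    have hX1 : (1:ℝ) ≤ (n:ℝ) ^ (p+1) := by
      calc (1:ℝ) = (1:ℝ) ^ (p+1) := (Real.one_rpow _).symm
      _ ≤ (n:ℝ) ^ (p+1) := Real.rpow_le_rpow one_pos.le (by linarith) hp1.le
    constructor
    · have hlow := T_lower_anti p hp hle (n-1) hm
      rw [hc] at hlow
      have hkey : (1:ℝ) ≤ (2:ℝ) ^ (-(p+1)) * (n:ℝ) ^ (p+1) := by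
        have a1 : (2:ℝ)^(p+1) ≤ (n:ℝ)^(p+1) := Real.rpow_le_rpow (by norm_num) hn2 hp1.le
        have a0 : (2:ℝ)^(-(p+1)) * (2:ℝ)^(p+1) = 1 := by
          rw [← Real.rpow_add two_pos, show -(p+1)+(p+1) = 0 by ring, Real.rpow_zero]
        nlinarith
      rw [show ((n:ℝ)-1+1) = (n:ℝ) by ring] at hlow
      calc (1 - (2:ℝ)^(-(p+1)))/(p+1) * (n:ℝ)^(p+1)
          = ((1 - (2:ℝ)^(-(p+1))) * (n:ℝ)^(p+1))/(p+1) := by ring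
        _ ≤ ((n:ℝ)^(p+1) - 1)/(p+1) := by gcongr; nlinarith
        _ ≤ T p (n-1) := hlow
    · have hup := T_upper_anti p hp hle (n-1) hm
      rw [hc] at hup
      have hmon : ((n:ℝ)-1) ^ (p+1) ≤ (n:ℝ) ^ (p+1) :=
        Real.rpow_le_rpow (by linarith) (by linarith) hp1.le
      have d1 : (((n:ℝ)-1)^(p+1) - 1)/(p+1) ≤ ((n:ℝ)^(p+1) - 1)/(p+1) := by gcongr
      have e : (1 + 1/(p+1)) * (n:ℝ)^(p+1) = (n:ℝ)^(p+1) + (n:ℝ)^(p+1)/(p+1) := by ring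
      have d2 : ((n:ℝ)^(p+1) - 1)/(p+1) ≤ (n:ℝ)^(p+1)/(p+1) := by gcongr; linarith
      linarith
  · refine IsBigTheta.of_bounds ((2:ℝ) ^ (-(p+1)) / (p+1)) 1
      (by positivity) 2 (fun n hn => ?_) (fun n hn => by
        have : (0:ℝ) < n := by exact_mod_cast (by omega : 0 < n)
        positivity)
    have hc : ((n-1:ℕ):ℝ) = (n:ℝ) - 1 := cast_pred n hn
    have hn2 : (2:ℝ) ≤ (n:ℝ) := by exact_mod_cast hn
    constructor
    · have hlow := T_lower_mono p hgt.le (n-1)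
      rw [hc] at hlow
      have key : (2:ℝ)^(-(p+1)) * (n:ℝ)^(p+1) ≤ ((n:ℝ)-1)^(p+1) := by
        have e1 : (2:ℝ)^(-(p+1)) * (n:ℝ)^(p+1) = ((n:ℝ)/2)^(p+1) := by
          rw [Real.div_rpow (by linarith) (by norm_num), Real.rpow_neg (by norm_num)]
          ring
        rw [e1]
        exact Real.rpow_le_rpow (by linarith) (by linarith) hp1.le
      calc (2:ℝ)^(-(p+1))/(p+1) * (n:ℝ)^(p+1)
          = ((2:ℝ)^(-(p+1)) * (n:ℝ)^(p+1))/(p+1) := by ring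
        _ ≤ ((n:ℝ)-1)^(p+1)/(p+1) := by gcongr
        _ ≤ T p (n-1) := hlow
    · have hup := T_upper_mono p hgt.le (n-1)
      rw [hc] at hup
      have : ((n:ℝ)-1)^(p+1) ≤ (n:ℝ)^(p+1) :=
        Real.rpow_le_rpow (by linarith) (by linarith) hp1.le
      linarith

lemma log3_gt_one : (1:ℝ) < Real.log 3 := by
  rw [show (1:ℝ) = Real.log (Real.exp 1) by rw [Real.log_exp]]
  apply Real.log_lt_log (Real.exp_pos 1)
  linarith [Real.exp_one_lt_d9]

lemma thetaT_log : IsBigTheta (fun n => T (-1) (n-1)) (fun n => Real.log n) := by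
  refine IsBigTheta.of_bounds 1 2 one_pos 3 (fun n hn => ?_) (fun n hn => ?_)
  · have hn3 : (3:ℝ) ≤ (n:ℝ) := by exact_mod_cast hn
    have hlog : 1 < Real.log n :=
      lt_of_lt_of_le log3_gt_one (Real.log_le_log (by norm_num) hn3)
    have hc : ((n-1:ℕ):ℝ) = (n:ℝ) - 1 := cast_pred n (by omega)
    have hm : 1 ≤ n - 1 := by omega
    constructor
    · have hlow := T_lower_log (n-1) hm
      rw [hc] at hlow
      simpa using hlow
    · have hup := T_upper_log (n-1) hm
      rw [hc] at hup
      have : Real.log ((n:ℝ)-1) ≤ Real.log n := Real.log_le_log (by linarith) (by linarith)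
      linarith
  · have hn3 : (3:ℝ) ≤ (n:ℝ) := by exact_mod_cast hn
    exact lt_trans one_pos (lt_of_lt_of_le log3_gt_one (Real.log_le_log (by norm_num) hn3))

lemma thetaT_one (p : ℝ) (hp : p < -1) :
    IsBigTheta (fun n => T p (n-1)) (fun _ => 1) := by
  refine IsBigTheta.of_bounds 1 (1 + 1/(-(p+1))) one_pos 2
    (fun n hn => ?_) (fun n hn => one_pos)
  have hm : 1 ≤ n - 1 := by omega
  exact ⟨by simpa using T_lower_one p (n-1) hm, by simpa using T_upper_bounded p hp (n-1) hm⟩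

lemma Z_eq_T (γ : ℝ) (n : ℕ) : Z γ n = T (-γ) (n-1) := rfl

lemma A_eq (γ : ℝ) (n : ℕ) : A γ n = (n:ℝ) * (T (-γ) (n-1))⁻¹ * T (1/2 - γ) (n-1) := rfl

lemma A_theta (γ : ℝ) {hZ hS : ℕ → ℝ}
    (HZ : IsBigTheta (fun n => T (-γ) (n-1)) hZ)
    (HS : IsBigTheta (fun n => T (1/2 - γ) (n-1)) hS)
    (N : ℕ) (hZpos : ∀ n, N ≤ n → 0 < hZ n) (hSpos : ∀ n, N ≤ n → 0 ≤ hS n) :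
    IsBigTheta (A γ) (fun n => (n:ℝ) * (hZ n)⁻¹ * hS n) := by
  have H1 : IsBigTheta (fun n : ℕ => ((n:ℝ)) * (T (-γ) (n-1))⁻¹)
      (fun n => (n:ℝ) * (hZ n)⁻¹) := by
    apply IsBigTheta.mul (isBigTheta_refl (fun n : ℕ => (n:ℝ))) (HZ.inv N hZpos) N
    · intro n _; positivity
    · exact fun n hn => inv_nonneg.mpr (hZpos n hn).le
  have H2 := H1.mul HS N (fun n hn =>
      mul_nonneg (Nat.cast_nonneg n) (inv_nonneg.mpr (hZpos n hn).le)) hSpos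
  exact H2.congr_f 0 (fun n _ => (A_eq γ n).symm)

-- γ > 3/2 : A = Θ(n)
lemma A_theta1 (γ : ℝ) (hγ : 3/2 < γ) : IsBigTheta (A γ) (fun n => (n:ℝ)) := by
  have H := A_theta γ (thetaT_one (-γ) (by linarith)) (thetaT_one (1/2-γ) (by linarith))
    0 (fun n _ => one_pos) (fun n _ => one_pos.le)
  exact H.congr_h 0 (fun n _ => by norm_num)

-- γ = 3/2 : A = Θ(n log n)
lemma A_theta2 : IsBigTheta (A (3/2)) (fun n => (n:ℝ) * Real.log n) := by
  have hS := thetaT_log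
  rw [show (-1:ℝ) = 1/2 - 3/2 by norm_num] at hS
  have H := A_theta (3/2) (thetaT_one (-(3/2)) (by norm_num)) hS
    3 (fun n _ => one_pos) (fun n hn => by
      have hn3 : (3:ℝ) ≤ (n:ℝ) := by exact_mod_cast hn
      exact (lt_trans one_pos (lt_of_lt_of_le log3_gt_one
        (Real.log_le_log (by norm_num) hn3))).le)
  exact H.congr_h 0 (fun n _ => by norm_num)

-- 1 < γ < 3/2 : A = Θ(n^{5/2-γ})
lemma A_theta3 (γ : ℝ) (h1 : 1 < γ) (h2 : γ < 3/2) :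
    IsBigTheta (A γ) (fun n => (n:ℝ) ^ (5/2 - γ)) := by
  have H := A_theta γ (thetaT_one (-γ) (by linarith)) (thetaT_pos (1/2-γ) (by linarith))
    0 (fun n _ => one_pos) (fun n _ => by positivity)
  refine H.congr_h 1 (fun n hn => ?_)
  have hnp : (0:ℝ) < n := by exact_mod_cast (by omega : 0 < n)
  simp only [inv_one, mul_one]
  nth_rewrite 1 [← Real.rpow_one (n:ℝ)]
  rw [rpm hnp (show (1:ℝ) + (1/2-γ+1) = 5/2-γ by ring)]

-- γ = 1 : A = Θ(n^{3/2}/log n)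
lemma A_theta4 : IsBigTheta (A 1) (fun n => (n:ℝ) ^ ((3:ℝ)/2) / Real.log n) := by
  have hZ := thetaT_log
  rw [show (-1:ℝ) = -(1:ℝ) by norm_num] at hZ
  have H := A_theta 1 hZ (thetaT_pos (1/2-1) (by norm_num))
    3 (fun n hn => by
      have hn3 : (3:ℝ) ≤ (n:ℝ) := by exact_mod_cast hn
      exact lt_trans one_pos (lt_of_lt_of_le log3_gt_one (Real.log_le_log (by norm_num) hn3)))
    (fun n _ => by positivity)
  refine H.congr_h 1 (fun n hn => ?_)
  have hnp : (0:ℝ) < n := by exact_mod_cast (by omega : 0 < n)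
  rw [show (n:ℝ)^((3:ℝ)/2)/Real.log n = (n:ℝ)^((3:ℝ)/2) * (Real.log n)⁻¹ from div_eq_mul_inv _ _,
    mul_right_comm]
  nth_rewrite 1 [← Real.rpow_one (n:ℝ)]
  rw [rpm hnp (show (1:ℝ) + (1/2-1+1) = (3:ℝ)/2 by norm_num)]

-- 0 ≤ γ < 1 : A = Θ(n^{3/2})
lemma A_theta5 (γ : ℝ) (h2 : γ < 1) :
    IsBigTheta (A γ) (fun n => (n:ℝ) ^ ((3:ℝ)/2)) := by
  have H := A_theta γ (thetaT_pos (-γ) (by linarith)) (thetaT_pos (1/2-γ) (by linarith))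
    1 (fun n hn => by
      have hnp : (0:ℝ) < n := by exact_mod_cast (by omega : 0 < n)
      positivity)
    (fun n _ => by positivity)
  refine H.congr_h 1 (fun n hn => ?_)
  have hnp : (0:ℝ) < n := by exact_mod_cast (by omega : 0 < n)
  rw [← Real.rpow_neg hnp.le]
  nth_rewrite 1 [← Real.rpow_one (n:ℝ)]
  rw [rpm hnp (show (1:ℝ) + -(-γ+1) = γ by ring),
    rpm hnp (show γ + (1/2-γ+1) = (3:ℝ)/2 by ring)]

lemma g_eq_one {β : ℝ} (h : 2 < β) (n : ℕ) : g β n = 1 := by simp [g, h]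

lemma g_eq_log (n : ℕ) : g 2 n = Real.log n := by norm_num [g]

lemma g_eq_rpow {β : ℝ} (h1 : 1 < β) (h2 : β < 2) (n : ℕ) :
    g β n = (n:ℝ) ^ (1 - β/2) := by
  simp [g, h1, not_lt.mpr h2.le, ne_of_lt h2]

lemma g_eq_sqrtdiv (n : ℕ) : g 1 n = Real.sqrt ((n:ℝ) / Real.log n) := by norm_num [g]

lemma g_eq_sqrt {β : ℝ} (h0 : β < 1) (n : ℕ) : g β n = Real.sqrt n := by
  have h2 : ¬ (2:ℝ) < β := by linarith
  have h2' : β ≠ 2 := by linarith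
  have h1 : ¬ (1:ℝ) < β := by linarith
  have h1' : β ≠ 1 := by linarith
  simp [g, h2, h2', h1, h1']

lemma g_nonneg (β : ℝ) (n : ℕ) : 0 ≤ g β n := by
  unfold g
  split_ifs
  · norm_num
  · rcases n with _ | m
    · simp
    · exact Real.log_nonneg (by exact_mod_cast Nat.succ_le_succ (Nat.zero_le m))
  · positivity
  · exact Real.sqrt_nonneg _
  · exact Real.sqrt_nonneg _

lemma log_nat_nonneg (n : ℕ) : 0 ≤ Real.log n := by
  rcases n with _ | m
  · simp
  · exact Real.log_nonneg (by exact_mod_cast Nat.succ_le_succ (Nat.zero_le m))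

lemma log_gt_one {n : ℕ} (hn : 3 ≤ n) : 1 < Real.log n := by
  have hn3 : (3:ℝ) ≤ (n:ℝ) := by exact_mod_cast hn
  exact lt_of_lt_of_le log3_gt_one (Real.log_le_log (by norm_num) hn3)

lemma final_mul {γ β : ℝ} {hA : ℕ → ℝ} (HA : IsBigTheta (A γ) hA) (N : ℕ)
    (hApos : ∀ n, N ≤ n → 0 ≤ hA n) (target : ℕ → ℝ)
    (heq : ∀ n, max N 3 ≤ n → g β n * hA n = target n) :
    IsBigTheta (fun n => g β n * A γ n) target :=
  ((isBigTheta_refl (g β)).mul HA N (fun n _ => g_nonneg β n) hApos).congr_h (max N 3) heq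

lemma sqrt_div_log (n : ℕ) :
    Real.sqrt ((n:ℝ)/Real.log n) = (n:ℝ)^((1:ℝ)/2) / Real.sqrt (Real.log n) := by
  rw [Real.sqrt_div (Nat.cast_nonneg n), Real.sqrt_eq_rpow]

lemma npow_two_eq (x : ℝ) : x ^ (2:ℕ) = x ^ ((2:ℝ)) := by
  rw [← Real.rpow_natCast x 2]; norm_num

theorem product_gA_order (γ β : ℝ) (hγ : 0 ≤ γ) (hβ : 0 ≤ β) :
    (2 < β →
      (3 / 2 < γ → IsBigTheta (fun n => g β n * A γ n) (fun n => (n : ℝ))) ∧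
      (γ = 3 / 2 → IsBigTheta (fun n => g β n * A γ n) (fun n => (n : ℝ) * Real.log n)) ∧
      (1 < γ ∧ γ < 3 / 2 →
        IsBigTheta (fun n => g β n * A γ n) (fun n => (n : ℝ) ^ (5 / 2 - γ))) ∧
      (γ = 1 → IsBigTheta (fun n => g β n * A γ n)
        (fun n => (n : ℝ) ^ (3 / 2 : ℝ) / Real.log n)) ∧
      (γ < 1 → IsBigTheta (fun n => g β n * A γ n) (fun n => (n : ℝ) ^ (3 / 2 : ℝ)))) ∧
    (β = 2 →
      (3 / 2 < γ → IsBigTheta (fun n => g β n * A γ n) (fun n => (n : ℝ) * Real.log n)) ∧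
      (γ = 3 / 2 → IsBigTheta (fun n => g β n * A γ n)
        (fun n => (n : ℝ) * Real.log n ^ 2)) ∧
      (1 < γ ∧ γ < 3 / 2 → IsBigTheta (fun n => g β n * A γ n)
        (fun n => (n : ℝ) ^ (5 / 2 - γ) * Real.log n)) ∧
      (γ = 1 → IsBigTheta (fun n => g β n * A γ n) (fun n => (n : ℝ) ^ (3 / 2 : ℝ))) ∧
      (γ < 1 → IsBigTheta (fun n => g β n * A γ n)
        (fun n => (n : ℝ) ^ (3 / 2 : ℝ) * Real.log n))) ∧
    (1 < β ∧ β < 2 →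
      (3 / 2 < γ → IsBigTheta (fun n => g β n * A γ n) (fun n => (n : ℝ) ^ (2 - β / 2))) ∧
      (γ = 3 / 2 → IsBigTheta (fun n => g β n * A γ n)
        (fun n => (n : ℝ) ^ (2 - β / 2) * Real.log n)) ∧
      (1 < γ ∧ γ < 3 / 2 → IsBigTheta (fun n => g β n * A γ n)
        (fun n => (n : ℝ) ^ (7 / 2 - γ - β / 2))) ∧
      (γ = 1 → IsBigTheta (fun n => g β n * A γ n)
        (fun n => (n : ℝ) ^ ((5 - β) / 2) / Real.log n)) ∧
      (γ < 1 → IsBigTheta (fun n => g β n * A γ n)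
        (fun n => (n : ℝ) ^ ((5 - β) / 2)))) ∧
    (β = 1 →
      (3 / 2 < γ → IsBigTheta (fun n => g β n * A γ n)
        (fun n => (n : ℝ) ^ (3 / 2 : ℝ) / Real.sqrt (Real.log n))) ∧
      (γ = 3 / 2 → IsBigTheta (fun n => g β n * A γ n)
        (fun n => (n : ℝ) ^ (3 / 2 : ℝ) * Real.sqrt (Real.log n))) ∧
      (1 < γ ∧ γ < 3 / 2 → IsBigTheta (fun n => g β n * A γ n)
        (fun n => (n : ℝ) ^ (3 - γ) / Real.sqrt (Real.log n))) ∧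
      (γ = 1 → IsBigTheta (fun n => g β n * A γ n)
        (fun n => (n : ℝ) ^ 2 / Real.log n ^ (3 / 2 : ℝ))) ∧
      (γ < 1 → IsBigTheta (fun n => g β n * A γ n)
        (fun n => (n : ℝ) ^ 2 / Real.sqrt (Real.log n)))) ∧
    (β < 1 →
      (3 / 2 < γ → IsBigTheta (fun n => g β n * A γ n) (fun n => (n : ℝ) ^ (3 / 2 : ℝ))) ∧
      (γ = 3 / 2 → IsBigTheta (fun n => g β n * A γ n)
        (fun n => (n : ℝ) ^ (3 / 2 : ℝ) * Real.log n)) ∧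
      (1 < γ ∧ γ < 3 / 2 → IsBigTheta (fun n => g β n * A γ n)
        (fun n => (n : ℝ) ^ (3 - γ))) ∧
      (γ = 1 → IsBigTheta (fun n => g β n * A γ n) (fun n => (n : ℝ) ^ 2 / Real.log n)) ∧
      (γ < 1 → IsBigTheta (fun n => g β n * A γ n) (fun n => (n : ℝ) ^ 2))) := by
  refine ⟨fun hb => ⟨fun hg => ?_, fun hg => ?_, fun hg => ?_, fun hg => ?_, fun hg => ?_⟩,
    fun hb => ⟨fun hg => ?_, fun hg => ?_, fun hg => ?_, fun hg => ?_, fun hg => ?_⟩,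
    fun hb => ⟨fun hg => ?_, fun hg => ?_, fun hg => ?_, fun hg => ?_, fun hg => ?_⟩,
    fun hb => ⟨fun hg => ?_, fun hg => ?_, fun hg => ?_, fun hg => ?_, fun hg => ?_⟩,
    fun hb => ⟨fun hg => ?_, fun hg => ?_, fun hg => ?_, fun hg => ?_, fun hg => ?_⟩⟩
  -- β > 2
  · exact final_mul (A_theta1 γ hg) 3 (fun n _ => Nat.cast_nonneg n) _
      (fun n hn => by rw [g_eq_one hb, one_mul])
  · subst hg
    exact final_mul A_theta2 3 (fun n _ => mul_nonneg (Nat.cast_nonneg n) (log_nat_nonneg n)) _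
      (fun n hn => by rw [g_eq_one hb, one_mul])
  · exact final_mul (A_theta3 γ hg.1 hg.2) 3 (fun n _ => by positivity) _
      (fun n hn => by rw [g_eq_one hb, one_mul])
  · subst hg
    exact final_mul A_theta4 3 (fun n _ => div_nonneg (by positivity) (log_nat_nonneg n)) _
      (fun n hn => by rw [g_eq_one hb, one_mul])
  · exact final_mul (A_theta5 γ hg) 3 (fun n _ => by positivity) _
      (fun n hn => by rw [g_eq_one hb, one_mul])
  -- β = 2
  · subst hb
    exact final_mul (A_theta1 γ hg) 3 (fun n _ => Nat.cast_nonneg n) _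
      (fun n hn => by rw [g_eq_log]; ring)
  · subst hb; subst hg
    exact final_mul A_theta2 3 (fun n _ => mul_nonneg (Nat.cast_nonneg n) (log_nat_nonneg n)) _
      (fun n hn => by rw [g_eq_log]; ring)
  · subst hb
    exact final_mul (A_theta3 γ hg.1 hg.2) 3 (fun n _ => by positivity) _
      (fun n hn => by rw [g_eq_log]; ring)
  · subst hb; subst hg
    refine final_mul A_theta4 3 (fun n _ => div_nonneg (by positivity) (log_nat_nonneg n)) _
      (fun n hn => ?_)
    have h3 : 3 ≤ n := le_trans (le_max_right _ _) hn
    have hl : (0:ℝ) < Real.log n := lt_trans one_pos (log_gt_one h3)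
    rw [g_eq_log, mul_comm, div_mul_cancel₀ _ (ne_of_gt hl)]
  · subst hb
    exact final_mul (A_theta5 γ hg) 3 (fun n _ => by positivity) _
      (fun n hn => by rw [g_eq_log]; ring)
  -- 1 < β < 2
  · refine final_mul (A_theta1 γ hg) 3 (fun n _ => Nat.cast_nonneg n) _ (fun n hn => ?_)
    have hn0 : (0:ℝ) < n := by exact_mod_cast (by omega : 0 < n)
    rw [g_eq_rpow hb.1 hb.2,
      show (n:ℝ)^(1-β/2) * (n:ℝ) = (n:ℝ)^(1-β/2) * (n:ℝ)^(1:ℝ) by rw [Real.rpow_one],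
      rpm hn0 (show (1-β/2) + 1 = 2 - β/2 by ring)]
  · subst hg
    refine final_mul A_theta2 3
      (fun n _ => mul_nonneg (Nat.cast_nonneg n) (log_nat_nonneg n)) _ (fun n hn => ?_)
    have hn0 : (0:ℝ) < n := by exact_mod_cast (by omega : 0 < n)
    rw [g_eq_rpow hb.1 hb.2,
      show (n:ℝ)^(1-β/2) * ((n:ℝ) * Real.log n)
        = ((n:ℝ)^(1-β/2) * (n:ℝ)^(1:ℝ)) * Real.log n by rw [Real.rpow_one]; ring,
      rpm hn0 (show (1-β/2) + 1 = 2 - β/2 by ring)]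
  · refine final_mul (A_theta3 γ hg.1 hg.2) 3 (fun n _ => by positivity) _ (fun n hn => ?_)
    have hn0 : (0:ℝ) < n := by exact_mod_cast (by omega : 0 < n)
    rw [g_eq_rpow hb.1 hb.2, rpm hn0 (show (1-β/2) + (5/2-γ) = 7/2 - γ - β/2 by ring)]
  · subst hg
    refine final_mul A_theta4 3
      (fun n _ => div_nonneg (by positivity) (log_nat_nonneg n)) _ (fun n hn => ?_)
    have hn0 : (0:ℝ) < n := by exact_mod_cast (by omega : 0 < n)
    rw [g_eq_rpow hb.1 hb.2,
      show (n:ℝ)^(1-β/2) * ((n:ℝ)^((3:ℝ)/2) / Real.log n)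
        = ((n:ℝ)^(1-β/2) * (n:ℝ)^((3:ℝ)/2)) / Real.log n by ring,
      rpm hn0 (show (1-β/2) + (3:ℝ)/2 = (5-β)/2 by ring)]
  · refine final_mul (A_theta5 γ hg) 3 (fun n _ => by positivity) _ (fun n hn => ?_)
    have hn0 : (0:ℝ) < n := by exact_mod_cast (by omega : 0 < n)
    rw [g_eq_rpow hb.1 hb.2, rpm hn0 (show (1-β/2) + (3:ℝ)/2 = (5-β)/2 by ring)]
  -- β = 1
  · subst hb
    refine final_mul (A_theta1 γ hg) 3 (fun n _ => Nat.cast_nonneg n) _ (fun n hn => ?_)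
    have hn0 : (0:ℝ) < n := by exact_mod_cast (by omega : 0 < n)
    rw [g_eq_sqrtdiv, sqrt_div_log,
      show (n:ℝ)^((1:ℝ)/2) / Real.sqrt (Real.log n) * (n:ℝ)
        = ((n:ℝ)^((1:ℝ)/2) * (n:ℝ)^(1:ℝ)) / Real.sqrt (Real.log n) by rw [Real.rpow_one]; ring,
      rpm hn0 (show (1:ℝ)/2 + 1 = 3/2 by norm_num)]
  · subst hb; subst hg
    refine final_mul A_theta2 3
      (fun n _ => mul_nonneg (Nat.cast_nonneg n) (log_nat_nonneg n)) _ (fun n hn => ?_)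
    have hn0 : (0:ℝ) < n := by exact_mod_cast (by omega : 0 < n)
    rw [g_eq_sqrtdiv, sqrt_div_log,
      show (n:ℝ)^((1:ℝ)/2) / Real.sqrt (Real.log n) * ((n:ℝ) * Real.log n)
        = ((n:ℝ)^((1:ℝ)/2) * (n:ℝ)^(1:ℝ)) * (Real.log n / Real.sqrt (Real.log n)) by
          rw [Real.rpow_one]; ring,
      rpm hn0 (show (1:ℝ)/2 + 1 = 3/2 by norm_num), Real.div_sqrt]
  · subst hb
    refine final_mul (A_theta3 γ hg.1 hg.2) 3 (fun n _ => by positivity) _ (fun n hn => ?_)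
    have hn0 : (0:ℝ) < n := by exact_mod_cast (by omega : 0 < n)
    rw [g_eq_sqrtdiv, sqrt_div_log,
      show (n:ℝ)^((1:ℝ)/2) / Real.sqrt (Real.log n) * (n:ℝ)^(5/2-γ)
        = ((n:ℝ)^((1:ℝ)/2) * (n:ℝ)^(5/2-γ)) / Real.sqrt (Real.log n) by ring,
      rpm hn0 (show (1:ℝ)/2 + (5/2-γ) = 3-γ by ring)]
  · subst hb; subst hg
    refine final_mul A_theta4 3
      (fun n _ => div_nonneg (by positivity) (log_nat_nonneg n)) _ (fun n hn => ?_)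
    have h3 : 3 ≤ n := le_trans (le_max_right _ _) hn
    have hn0 : (0:ℝ) < n := by exact_mod_cast (by omega : 0 < n)
    have hl : (0:ℝ) < Real.log n := lt_trans one_pos (log_gt_one h3)
    rw [g_eq_sqrtdiv, sqrt_div_log,
      show (n:ℝ)^((1:ℝ)/2) / Real.sqrt (Real.log n) * ((n:ℝ)^((3:ℝ)/2) / Real.log n)
        = ((n:ℝ)^((1:ℝ)/2) * (n:ℝ)^((3:ℝ)/2)) / (Real.log n * Real.sqrt (Real.log n)) by ring,
      rpm hn0 (show (1:ℝ)/2 + (3:ℝ)/2 = 2 by norm_num), npow_two_eq,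
      show Real.log (n:ℝ) * Real.sqrt (Real.log n) = Real.log (n:ℝ) ^ ((3:ℝ)/2) by
        rw [Real.sqrt_eq_rpow]
        nth_rewrite 1 [← Real.rpow_one (Real.log (n:ℝ))]
        exact rpm hl (by norm_num)]
  · subst hb
    refine final_mul (A_theta5 γ hg) 3 (fun n _ => by positivity) _ (fun n hn => ?_)
    have hn0 : (0:ℝ) < n := by exact_mod_cast (by omega : 0 < n)
    rw [g_eq_sqrtdiv, sqrt_div_log,
      show (n:ℝ)^((1:ℝ)/2) / Real.sqrt (Real.log n) * (n:ℝ)^((3:ℝ)/2)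
        = ((n:ℝ)^((1:ℝ)/2) * (n:ℝ)^((3:ℝ)/2)) / Real.sqrt (Real.log n) by ring,
      rpm hn0 (show (1:ℝ)/2 + (3:ℝ)/2 = 2 by norm_num), npow_two_eq]
  -- β < 1
  · refine final_mul (A_theta1 γ hg) 3 (fun n _ => Nat.cast_nonneg n) _ (fun n hn => ?_)
    have hn0 : (0:ℝ) < n := by exact_mod_cast (by omega : 0 < n)
    rw [g_eq_sqrt hb, Real.sqrt_eq_rpow,
      show (n:ℝ)^((1:ℝ)/2) * (n:ℝ) = (n:ℝ)^((1:ℝ)/2) * (n:ℝ)^(1:ℝ) by rw [Real.rpow_one],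
      rpm hn0 (show (1:ℝ)/2 + 1 = 3/2 by norm_num)]
  · subst hg
    refine final_mul A_theta2 3
      (fun n _ => mul_nonneg (Nat.cast_nonneg n) (log_nat_nonneg n)) _ (fun n hn => ?_)
    have hn0 : (0:ℝ) < n := by exact_mod_cast (by omega : 0 < n)
    rw [g_eq_sqrt hb, Real.sqrt_eq_rpow,
      show (n:ℝ)^((1:ℝ)/2) * ((n:ℝ) * Real.log n)
        = ((n:ℝ)^((1:ℝ)/2) * (n:ℝ)^(1:ℝ)) * Real.log n by rw [Real.rpow_one]; ring,
      rpm hn0 (show (1:ℝ)/2 + 1 = 3/2 by norm_num)]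
  · refine final_mul (A_theta3 γ hg.1 hg.2) 3 (fun n _ => by positivity) _ (fun n hn => ?_)
    have hn0 : (0:ℝ) < n := by exact_mod_cast (by omega : 0 < n)
    rw [g_eq_sqrt hb, Real.sqrt_eq_rpow, rpm hn0 (show (1:ℝ)/2 + (5/2-γ) = 3-γ by ring)]
  · subst hg
    refine final_mul A_theta4 3
      (fun n _ => div_nonneg (by positivity) (log_nat_nonneg n)) _ (fun n hn => ?_)
    have hn0 : (0:ℝ) < n := by exact_mod_cast (by omega : 0 < n)
    rw [g_eq_sqrt hb, Real.sqrt_eq_rpow,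
      show (n:ℝ)^((1:ℝ)/2) * ((n:ℝ)^((3:ℝ)/2) / Real.log n)
        = ((n:ℝ)^((1:ℝ)/2) * (n:ℝ)^((3:ℝ)/2)) / Real.log n by ring,
      rpm hn0 (show (1:ℝ)/2 + (3:ℝ)/2 = 2 by norm_num), npow_two_eq]
  · refine final_mul (A_theta5 γ hg) 3 (fun n _ => by positivity) _ (fun n hn => ?_)
    have hn0 : (0:ℝ) < n := by exact_mod_cast (by omega : 0 < n)
    rw [g_eq_sqrt hb, Real.sqrt_eq_rpow,
      rpm hn0 (show (1:ℝ)/2 + (3:ℝ)/2 = 2 by norm_num), npow_two_eq]
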